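/- Let H(ℤ) be the discrete Heisenberg group, i.e. the group under matrix multiplication of 3×3 upper unitriangular integer matrices [[1,a,c],[0,1,b],[0,0,1]] with a,b,c ∈ ℤ. Then H(ℤ) is finitely generated, and for every finite generating set Σ of H(ℤ) one has α_{H(ℤ),Σ} ∼ (n ↦ n²); that is, the automorphic growth of the Heisenberg group is quadratic. -/

import Mathlib

/-- The ball of radius `n` in a group with respect to a generating set `S`:
elements expressible as a product of at most `n` elements of `S ∪ S⁻¹`. -/
def wordBall {G : Type*} [Group G] (S : Set G) (n : ℕ) : Set G :=
  {g | ∃ l : List G, (∀ x ∈ l, x ∈ S ∨ x⁻¹ ∈ S) ∧ l.length ≤ n ∧ l.prod = g}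

/-- The automorphic growth function: the number of `Aut G`-orbits of `G`
containing an element of word length at most `n` with respect to `S`. -/
noncomputable def autGrowth {G : Type*} [Group G] (S : Set G) (n : ℕ) : ℕ :=
  Set.ncard (Quotient.mk (MulAction.orbitRel (MulAut G) G) '' wordBall S n)

def GrowthLe (f g : ℕ → ℕ) : Prop :=
  ∃ lam : ℕ, 0 < lam ∧ ∀ n, f n ≤ lam * g (lam * n + lam) + lam

def GrowthEquiv (f g : ℕ → ℕ) : Prop := GrowthLe f g ∧ GrowthLe g f


/-- A 3×3 integer matrix is upper unitriangular. -/
def IsHeis (M : Matrix (Fin 3) (Fin 3) ℤ) : Prop :=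
  M 0 0 = 1 ∧ M 1 1 = 1 ∧ M 2 2 = 1 ∧ M 1 0 = 0 ∧ M 2 0 = 0 ∧ M 2 1 = 0

/-- The discrete Heisenberg group: 3×3 upper unitriangular integer matrices
under matrix multiplication. -/
def Heisenberg : Type := {M : Matrix (Fin 3) (Fin 3) ℤ // IsHeis M}

namespace Heisenberg

theorem mul_mem {A B : Matrix (Fin 3) (Fin 3) ℤ} (hA : IsHeis A) (hB : IsHeis B) :
    IsHeis (A * B) := by
  obtain ⟨a1, a2, a3, a4, a5, a6⟩ := hA
  obtain ⟨b1, b2, b3, b4, b5, b6⟩ := hB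
  refine ⟨?_, ?_, ?_, ?_, ?_, ?_⟩ <;>
    simp [Matrix.mul_apply, Fin.sum_univ_three, a1, a2, a3, a4, a5, a6, b1, b2, b3, b4, b5, b6]

theorem one_mem : IsHeis (1 : Matrix (Fin 3) (Fin 3) ℤ) := by
  refine ⟨?_, ?_, ?_, ?_, ?_, ?_⟩ <;> simp [Matrix.one_apply]

def heisInv (A : Matrix (Fin 3) (Fin 3) ℤ) : Matrix (Fin 3) (Fin 3) ℤ :=
  !![1, -(A 0 1), A 0 1 * A 1 2 - A 0 2; 0, 1, -(A 1 2); 0, 0, 1]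

theorem inv_mem (A : Matrix (Fin 3) (Fin 3) ℤ) : IsHeis (heisInv A) := by
  refine ⟨?_, ?_, ?_, ?_, ?_, ?_⟩ <;> simp [heisInv, Matrix.vecHead, Matrix.vecTail]

theorem inv_mul (A : Matrix (Fin 3) (Fin 3) ℤ) (hA : IsHeis A) : heisInv A * A = 1 := by
  obtain ⟨a1, a2, a3, a4, a5, a6⟩ := hA
  ext i j
  fin_cases i <;> fin_cases j <;>
    simp [heisInv, Matrix.mul_apply, Fin.sum_univ_three, Matrix.one_apply,
      a1, a2, a3, a4, a5, a6] <;> ring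

/-- Matrix multiplication makes the set of unitriangular matrices a group. -/
instance : Group Heisenberg where
  mul A B := ⟨A.1 * B.1, mul_mem A.2 B.2⟩
  one := ⟨1, one_mem⟩
  inv A := ⟨heisInv A.1, inv_mem A.1⟩
  mul_assoc a b c := Subtype.ext (mul_assoc a.1 b.1 c.1)
  one_mul a := Subtype.ext (one_mul a.1)
  mul_one a := Subtype.ext (mul_one a.1)
  inv_mul_cancel a := Subtype.ext (inv_mul a.1 a.2)

end Heisenberg

/-!
Write `(a, b, c)` for the matrix `[[1, a, c], [0, 1, b], [0, 0, 1]]`, so that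
`(a, b, c) (a', b', c') = (a + a', b + b', c + c' + a b')`, and take the generators
`x = (1, 0, 0)`, `y = (0, 1, 0)`. A word of length `n` has `|a|, |b| ≤ n` and `|c| ≤ n²`.
Automorphisms act on the abelianization `ℤ²` through `GL₂(ℤ)`, so a Euclidean algorithm made of
transvections and the swap `(a, b, c) ↦ (b, a, ab - c)` moves `(a, b, c)` to some `(d, 0, c')`
with `0 < d ≤ n`, and the shear `(a, b, c) ↦ (a, b, c + l a)` reduces `c'` modulo `d`. With the
central elements `(0, 0, c)`, `0 ≤ c ≤ n²`, this leaves `O(n²)` orbits in the ball of radius `n`.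
Conversely an automorphism maps `(0, 0, k)` to `(0, 0, ±k)`, and for `k ≤ n²` this element is a
product of two commutators `[x^q, y^(n+1)] [x^r, y]` of length `O(n)`, giving `n²` distinct
orbits in the ball of radius `6n + 6`. Finally, changing the finite generating set changes word
lengths, hence the automorphic growth, by a bounded factor.
-/

section WordBall

open scoped Pointwise commutatorElement

variable {G : Type*} [Group G] {S T : Set G}

theorem wordBall_mono : Monotone (wordBall S) :=
  fun _ _ hmn _ ⟨l, hl, hlen, hprod⟩ => ⟨l, hl, hlen.trans hmn, hprod⟩

theorem mem_wordBall_one {s : G} (hs : s ∈ S) : s ∈ wordBall S 1 :=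
  ⟨[s], by simp [hs], by simp, by simp⟩

theorem pow_mem_wordBall {s : G} (hs : s ∈ S) (k : ℕ) : s ^ k ∈ wordBall S k :=
  ⟨List.replicate k s, by simp [List.mem_replicate, hs], by simp, List.prod_replicate k s⟩

theorem mul_mem_wordBall {g h : G} {m n : ℕ} (hg : g ∈ wordBall S m) (hh : h ∈ wordBall S n) :
    g * h ∈ wordBall S (m + n) := by
  obtain ⟨l, hl, hlen, rfl⟩ := hg
  obtain ⟨l', hl', hlen', rfl⟩ := hh
  refine ⟨l ++ l', fun x hx => ?_, by simp; omega, List.prod_append⟩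
  exact (List.mem_append.1 hx).elim (hl x) (hl' x)

theorem inv_mem_wordBall {g : G} {n : ℕ} (hg : g ∈ wordBall S n) : g⁻¹ ∈ wordBall S n := by
  obtain ⟨l, hl, hlen, rfl⟩ := hg
  refine ⟨(l.map (·⁻¹)).reverse, ?_, by simpa using hlen, (List.prod_inv_reverse l).symm⟩
  simp only [List.mem_reverse, List.mem_map]
  rintro _ ⟨x, hx, rfl⟩
  simpa [or_comm] using hl x hx

theorem commutatorElement_mem_wordBall {g h : G} {m n : ℕ} (hg : g ∈ wordBall S m)
    (hh : h ∈ wordBall S n) : ⁅g, h⁆ ∈ wordBall S (2 * (m + n)) := by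
  rw [commutatorElement_def]
  exact wordBall_mono (by omega) (mul_mem_wordBall (mul_mem_wordBall (mul_mem_wordBall hg hh)
    (inv_mem_wordBall hg)) (inv_mem_wordBall hh))

theorem wordBall_subset_of_mul_mem {P : ℕ → Set G} (hmono : Monotone P) (hone : (1 : G) ∈ P 0)
    (hmul : ∀ {m n : ℕ} {g h : G}, g ∈ P m → h ∈ P n → g * h ∈ P (m + n))
    (hS : ∀ x : G, x ∈ S ∨ x⁻¹ ∈ S → x ∈ P 1) (n : ℕ) : wordBall S n ⊆ P n := by
  rintro _ ⟨l, hl, hlen, rfl⟩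
  refine hmono hlen ?_
  clear hlen
  induction l with
  | nil => exact hone
  | cons x l ih =>
    rw [List.prod_cons, List.length_cons, add_comm]
    exact hmul (hS x (hl x List.mem_cons_self)) (ih fun y hy => hl y (List.mem_cons_of_mem x hy))

theorem wordBall_subset_wordBall {m : ℕ} (hST : ∀ s ∈ S, s ∈ wordBall T m) (n : ℕ) :
    wordBall S n ⊆ wordBall T (m * n) := by
  refine wordBall_subset_of_mul_mem (P := fun k => wordBall T (m * k))
    (fun _ _ h => wordBall_mono (Nat.mul_le_mul_left m h)) ⟨[], by simp, by simp, rfl⟩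
    (fun hg hh => by rw [Nat.mul_add]; exact mul_mem_wordBall hg hh) (fun x hx => ?_) n
  rcases hx with hx | hx
  · simpa using hST x hx
  · simpa using inv_mem_wordBall (hST _ hx)

theorem exists_mem_wordBall (hT : Subgroup.closure T = ⊤) (g : G) : ∃ n, g ∈ wordBall T n := by
  have hg : g ∈ Subgroup.closure T := hT ▸ Subgroup.mem_top g
  induction hg using Subgroup.closure_induction with
  | mem s hs => exact ⟨1, mem_wordBall_one hs⟩
  | one => exact ⟨0, [], by simp, le_rfl, rfl⟩
  | mul _ _ _ _ hg hh =>
    obtain ⟨m, hg⟩ := hg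
    obtain ⟨n, hh⟩ := hh
    exact ⟨m + n, mul_mem_wordBall hg hh⟩
  | inv _ _ hg =>
    obtain ⟨n, hg⟩ := hg
    exact ⟨n, inv_mem_wordBall hg⟩

theorem wordBall_finite (hS : S.Finite) (n : ℕ) : (wordBall S n).Finite := by
  have : Finite ↥(S ∪ S⁻¹) := (hS.union hS.inv).to_subtype
  refine ((List.finite_length_le _ n).image
    fun l : List ↥(S ∪ S⁻¹) => (l.map (↑)).prod).subset ?_
  rintro _ ⟨l, hl, hlen, rfl⟩
  lift l to List ↥(S ∪ S⁻¹) using hl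
  exact ⟨l, by simpa using hlen, rfl⟩

theorem autGrowth_mono (hS : S.Finite) : Monotone (autGrowth S) := fun _ n hmn =>
  Set.ncard_le_ncard (Set.image_mono (wordBall_mono hmn)) ((wordBall_finite hS n).image _)

theorem growthLe_autGrowth (hS : S.Finite) (hT : T.Finite) (hgen : Subgroup.closure T = ⊤) :
    GrowthLe (autGrowth S) (autGrowth T) := by
  choose len hlen using exists_mem_wordBall hgen
  obtain ⟨m, hm⟩ := (hS.image len).bddAbove
  have hST : ∀ s ∈ S, s ∈ wordBall T (m + 1) :=
    fun s hs => wordBall_mono (Nat.le_succ_of_le (hm ⟨s, hs, rfl⟩)) (hlen s)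
  refine ⟨m + 1, m.succ_pos, fun n => ?_⟩
  calc autGrowth S n ≤ autGrowth T ((m + 1) * n) :=
        Set.ncard_le_ncard (Set.image_mono (wordBall_subset_wordBall hST n))
          ((wordBall_finite hT _).image _)
    _ ≤ autGrowth T ((m + 1) * n + (m + 1)) := autGrowth_mono hT (Nat.le_add_right _ _)
    _ ≤ (m + 1) * autGrowth T ((m + 1) * n + (m + 1)) + (m + 1) :=
        (Nat.le_mul_of_pos_left _ m.succ_pos).trans (Nat.le_add_right _ _)

theorem MulAction.orbitRel_mulAut_apply (φ : MulAut G) (g : G) :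
    MulAction.orbitRel (MulAut G) G g (φ g) :=
  MulAction.mem_orbit_smul φ g

end WordBall

theorem GrowthLe.trans {f g h : ℕ → ℕ} (hfg : GrowthLe f g) (hgh : GrowthLe g h)
    (hh : Monotone h) : GrowthLe f h := by
  obtain ⟨l, hl, hf⟩ := hfg
  obtain ⟨m, hm, hg⟩ := hgh
  refine ⟨l * m + l + m, by positivity, fun n => ?_⟩
  have harg : m * (l * n + l) + m ≤ (l * m + l + m) * n + (l * m + l + m) := by nlinarith
  calc f n ≤ l * g (l * n + l) + l := hf n
    _ ≤ l * (m * h (m * (l * n + l) + m) + m) + l := by gcongr; exact hg _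
    _ ≤ l * (m * h ((l * m + l + m) * n + (l * m + l + m)) + m) + l := by gcongr; exact hh harg
    _ ≤ (l * m + l + m) * h ((l * m + l + m) * n + (l * m + l + m)) + (l * m + l + m) := by
      nlinarith

theorem Setoid.ncard_image_mk_le_card {α ι : Type*} (r : Setoid α) {t : Set α} {s : Finset ι}
    (f : ι → α) (h : ∀ x ∈ t, ∃ i ∈ s, r x (f i)) : (Quotient.mk r '' t).ncard ≤ s.card := by
  calc (Quotient.mk r '' t).ncard ≤ (Quotient.mk r ∘ f '' s).ncard := by
        refine Set.ncard_le_ncard ?_ (s.finite_toSet.image _)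
        rintro _ ⟨x, hx, rfl⟩
        obtain ⟨i, hi, hxi⟩ := h x hx
        exact ⟨i, hi, Quotient.sound hxi |>.symm⟩
    _ ≤ (s : Set ι).ncard := Set.ncard_image_le s.finite_toSet
    _ = s.card := Set.ncard_coe_finset s

theorem Setoid.card_le_ncard_image_mk {α ι : Type*} (r : Setoid α) {t : Set α} (ht : t.Finite)
    {s : Finset ι} (f : ι → α) (hmem : ∀ i ∈ s, f i ∈ t)
    (hinj : ∀ i ∈ s, ∀ j ∈ s, r (f i) (f j) → i = j) : s.card ≤ (Quotient.mk r '' t).ncard := by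
  rw [← Set.ncard_coe_finset]
  exact Set.ncard_le_ncard_of_injOn (Quotient.mk r ∘ f) (fun i hi => ⟨f i, hmem i hi, rfl⟩)
    (fun i hi j hj hij => hinj i hi j hj (Quotient.exact hij)) (ht.image _)

namespace Heisenberg

open scoped commutatorElement

def mk (a b c : ℤ) : Heisenberg :=
  ⟨!![1, a, c; 0, 1, b; 0, 0, 1], by refine ⟨?_, ?_, ?_, ?_, ?_, ?_⟩ <;> rfl⟩

def a (g : Heisenberg) : ℤ := g.1 0 1

def b (g : Heisenberg) : ℤ := g.1 1 2

def c (g : Heisenberg) : ℤ := g.1 0 2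

@[simp] theorem mk_a (a b c : ℤ) : (mk a b c).a = a := rfl
@[simp] theorem mk_b (a b c : ℤ) : (mk a b c).b = b := rfl
@[simp] theorem mk_c (a b c : ℤ) : (mk a b c).c = c := rfl

@[ext] theorem ext {g h : Heisenberg} (ha : g.a = h.a) (hb : g.b = h.b) (hc : g.c = h.c) :
    g = h := by
  obtain ⟨M, hM⟩ := g
  obtain ⟨N, hN⟩ := h
  obtain ⟨m1, m2, m3, m4, m5, m6⟩ := hM
  obtain ⟨n1, n2, n3, n4, n5, n6⟩ := hN
  refine Subtype.ext (Matrix.ext fun i j => ?_)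
  fin_cases i <;> fin_cases j <;> simp_all [a, b, c]

theorem mk_a_b_c (g : Heisenberg) : mk g.a g.b g.c = g := by ext <;> rfl

theorem val_mul (g h : Heisenberg) : (g * h).1 = g.1 * h.1 := rfl

@[simp] theorem mul_a (g h : Heisenberg) : (g * h).a = g.a + h.a := by
  obtain ⟨g1, g2, g3, g4, g5, g6⟩ := g.2
  obtain ⟨h1, h2, h3, h4, h5, h6⟩ := h.2
  simp [a, val_mul, Matrix.mul_apply, Fin.sum_univ_three, *]
  ring

@[simp] theorem mul_b (g h : Heisenberg) : (g * h).b = g.b + h.b := by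
  obtain ⟨g1, g2, g3, g4, g5, g6⟩ := g.2
  obtain ⟨h1, h2, h3, h4, h5, h6⟩ := h.2
  simp [b, val_mul, Matrix.mul_apply, Fin.sum_univ_three, *]
  ring

@[simp] theorem mul_c (g h : Heisenberg) : (g * h).c = g.c + h.c + g.a * h.b := by
  obtain ⟨g1, g2, g3, g4, g5, g6⟩ := g.2
  obtain ⟨h1, h2, h3, h4, h5, h6⟩ := h.2
  simp [a, b, c, val_mul, Matrix.mul_apply, Fin.sum_univ_three, *]
  ring

@[simp] theorem inv_a (g : Heisenberg) : g⁻¹.a = -g.a := rfl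

@[simp] theorem inv_b (g : Heisenberg) : g⁻¹.b = -g.b := rfl

@[simp] theorem inv_c (g : Heisenberg) : g⁻¹.c = g.a * g.b - g.c := rfl

@[simp] theorem one_a : (1 : Heisenberg).a = 0 := rfl
@[simp] theorem one_b : (1 : Heisenberg).b = 0 := rfl
@[simp] theorem one_c : (1 : Heisenberg).c = 0 := rfl

@[simp] theorem mk_zero_zero_zero : mk 0 0 0 = 1 := by ext <;> rfl

theorem mk_zpow {a b : ℤ} (hab : a * b = 0) (c k : ℤ) :
    mk a b c ^ k = mk (k * a) (k * b) (k * c) := by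
  induction k using Int.induction_on with
  | zero => simp
  | succ k ih =>
    rw [zpow_add_one, ih]
    ext
    · simp; ring
    · simp; ring
    · simp; linear_combination k * hab
  | pred k ih =>
    rw [zpow_sub_one, ih]
    ext
    · simp; ring
    · simp; ring
    · simp; linear_combination (1 + k) * hab

theorem commutatorElement_eq (g h : Heisenberg) : ⁅g, h⁆ = mk 0 0 (g.a * h.b - g.b * h.a) := by
  ext <;> simp [commutatorElement_def]
  ring

instance : DecidableEq Heisenberg := inferInstanceAs (DecidableEq {M // IsHeis M})

def gens : Finset Heisenberg := {mk 1 0 0, mk 0 1 0}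

theorem closure_gens : Subgroup.closure (gens : Set Heisenberg) = ⊤ := by
  set H := Subgroup.closure (gens : Set Heisenberg)
  have hx : mk 1 0 0 ∈ H := Subgroup.subset_closure (by simp [gens])
  have hy : mk 0 1 0 ∈ H := Subgroup.subset_closure (by simp [gens])
  have hz : mk 0 0 1 ∈ H := by
    have hxy : ⁅mk 1 0 0, mk 0 1 0⁆ = mk 0 0 1 := by simp [commutatorElement_eq]
    rw [← hxy, commutatorElement_def]
    exact H.mul_mem (H.mul_mem (H.mul_mem hx hy) (H.inv_mem hx)) (H.inv_mem hy)
  refine eq_top_iff.2 fun g _ => ?_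
  have hg : g = mk 1 0 0 ^ g.a * mk 0 1 0 ^ g.b * mk 0 0 1 ^ (g.c - g.a * g.b) := by
    simp only [mk_zpow (mul_zero _), mk_zpow (zero_mul _)]
    ext <;> simp
  rw [hg]
  exact H.mul_mem (H.mul_mem (H.zpow_mem hx _) (H.zpow_mem hy _)) (H.zpow_mem hz _)

def box (n : ℕ) : Set Heisenberg := {g | |g.a| ≤ n ∧ |g.b| ≤ n ∧ |g.c| ≤ n ^ 2}

theorem mul_mem_box {m n : ℕ} {g h : Heisenberg} (hg : g ∈ box m) (hh : h ∈ box n) :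
    g * h ∈ box (m + n) := by
  obtain ⟨hga, hgb, hgc⟩ := hg
  obtain ⟨hha, hhb, hhc⟩ := hh
  have hab : |g.a * h.b| ≤ m * n := by
    rw [abs_mul]; exact mul_le_mul hga hhb (abs_nonneg _) (Nat.cast_nonneg _)
  refine ⟨?_, ?_, ?_⟩ <;> simp only [mul_a, mul_b, mul_c] <;> push_cast
  · exact (abs_add_le _ _).trans (add_le_add hga hha)
  · exact (abs_add_le _ _).trans (add_le_add hgb hhb)
  · calc |g.c + h.c + g.a * h.b| ≤ |g.c| + |h.c| + |g.a * h.b| := abs_add_three _ _ _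
      _ ≤ (m : ℤ) ^ 2 + n ^ 2 + m * n := add_le_add (add_le_add hgc hhc) hab
      _ ≤ ((m : ℤ) + n) ^ 2 := by nlinarith [(m * n).cast_nonneg (α := ℤ)]

theorem box_mono : Monotone box := fun m n hmn g ⟨ha, hb, hc⟩ => by
  have hmn : (m : ℤ) ≤ n := by exact_mod_cast hmn
  exact ⟨ha.trans hmn, hb.trans hmn, hc.trans (by gcongr)⟩

theorem wordBall_gens_subset_box (n : ℕ) : wordBall (gens : Set Heisenberg) n ⊆ box n := by
  have hgens : ∀ y ∈ (gens : Set Heisenberg), y ∈ box 1 ∧ y⁻¹ ∈ box 1 := by simp [gens, box]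
  refine wordBall_subset_of_mul_mem box_mono (by simp [box]) mul_mem_box (fun x hx => ?_) n
  rcases hx with hx | hx
  · exact (hgens x hx).1
  · simpa using (hgens _ hx).2

def triangle (n : ℤ) : ℤ := n * (n + 1) / 2

theorem triangle_add (m n : ℤ) : triangle (m + n) = triangle m + triangle n + m * n := by
  unfold triangle
  obtain ⟨r, hr⟩ := Int.even_mul_succ_self m
  obtain ⟨s, hs⟩ := Int.even_mul_succ_self n
  rw [show (m + n) * (m + n + 1) = m * (m + 1) + n * (n + 1) + 2 * (m * n) by ring]
  omega

def swap : MulAut Heisenberg where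
  toFun g := mk g.b g.a (g.a * g.b - g.c)
  invFun g := mk g.b g.a (g.a * g.b - g.c)
  left_inv g := by ext <;> simp; ring
  right_inv g := by ext <;> simp; ring
  map_mul' g h := by ext <;> simp; ring

theorem swap_apply (g : Heisenberg) : swap g = mk g.b g.a (g.a * g.b - g.c) := rfl

def neg : MulAut Heisenberg where
  toFun g := mk (-g.a) (-g.b) g.c
  invFun g := mk (-g.a) (-g.b) g.c
  left_inv g := by ext <;> simp
  right_inv g := by ext <;> simp
  map_mul' g h := by ext <;> simp [add_comm]

/-- The triangular-number correction of the central coordinate is what makes the transvection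
`(a, b) ↦ (a + k b, b)` of the abelianization multiplicative. -/
def transvection (k : ℤ) : MulAut Heisenberg where
  toFun g := mk (g.a + k * g.b) g.b (g.c + k * triangle g.b)
  invFun g := mk (g.a - k * g.b) g.b (g.c - k * triangle g.b)
  left_inv g := by ext <;> simp
  right_inv g := by ext <;> simp
  map_mul' g h := by ext <;> simp [triangle_add] <;> ring

theorem transvection_apply (k : ℤ) (g : Heisenberg) :
    transvection k g = mk (g.a + k * g.b) g.b (g.c + k * triangle g.b) := rfl

def shear (l : ℤ) : MulAut Heisenberg where
  toFun g := mk g.a g.b (g.c + l * g.a)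
  invFun g := mk g.a g.b (g.c - l * g.a)
  left_inv g := by ext <;> simp
  right_inv g := by ext <;> simp
  map_mul' g h := by ext <;> simp; ring

theorem shear_apply (l : ℤ) (g : Heisenberg) : shear l g = mk g.a g.b (g.c + l * g.a) := rfl

local infix:50 " ≈ₐ " => MulAction.orbitRel (MulAut Heisenberg) Heisenberg

theorem exists_orbitRel_mk_pos (a b c : ℤ) (hab : a ≠ 0 ∨ b ≠ 0) :
    ∃ d c', 0 < d ∧ d ≤ max |a| |b| ∧ mk a b c ≈ₐ mk d 0 c' := by
  induction hn : b.natAbs using Nat.strong_induction_on generalizing a b c with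
  | _ n ih =>
  subst hn
  rcases eq_or_ne b 0 with rfl | hb
  · rcases (show a ≠ 0 by simpa using hab).lt_or_gt with ha | ha
    · exact ⟨-a, c, by omega, by simp [abs_of_neg ha],
        MulAction.orbitRel_mulAut_apply neg (mk a 0 c)⟩
    · exact ⟨a, c, ha, by simp [abs_of_pos ha], Setoid.refl' _ _⟩
  · have hmod : 0 ≤ a % b ∧ a % b < b.natAbs := ⟨Int.emod_nonneg a hb, Int.emod_lt a hb⟩
    have htrans : transvection (-(a / b)) (mk a b c) = mk (a % b) b (c - a / b * triangle b) := by
      ext <;> simp [transvection_apply, Int.emod_def] <;> ring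
    have hstep : mk a b c ≈ₐ mk b (a % b) (a % b * b - (c - a / b * triangle b)) :=
      Setoid.trans' _ (htrans ▸ MulAction.orbitRel_mulAut_apply _ _)
        (MulAction.orbitRel_mulAut_apply swap _)
    obtain ⟨d, c', hd, hle, hrel⟩ := ih _ (by omega) b (a % b) _ (Or.inl hb) rfl
    refine ⟨d, c', hd, hle.trans ?_, Setoid.trans' _ hstep hrel⟩
    have : |a % b| ≤ |b| := by rw [abs_of_nonneg hmod.1, Int.abs_eq_natAbs]; omega
    exact max_le (le_max_right _ _) (this.trans (le_max_right _ _))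

noncomputable def reps (n : ℕ) : Finset (ℤ × ℤ) :=
  Finset.Icc (0 : ℤ) n ×ˢ Finset.Icc (0 : ℤ) n ∪ {0} ×ˢ Finset.Icc (0 : ℤ) (n ^ 2)

theorem card_reps_le (n : ℕ) : (reps n).card ≤ 2 * (n + 1) ^ 2 := by
  refine (Finset.card_union_le _ _).trans ?_
  simp only [Finset.card_product, Int.card_Icc, Finset.card_singleton]
  have h₁ : ((n : ℤ) + 1 - 0).toNat = n + 1 := by omega
  have h₂ : ((n : ℤ) ^ 2 + 1 - 0).toNat = n ^ 2 + 1 := by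
    rw [show ((n : ℤ) ^ 2 + 1 - 0) = ((n ^ 2 + 1 : ℕ) : ℤ) by push_cast; ring, Int.toNat_natCast]
  rw [h₁, h₂]
  nlinarith

theorem exists_mem_reps_orbitRel {n : ℕ} {g : Heisenberg} (hg : g ∈ box n) :
    ∃ p ∈ reps n, g ≈ₐ mk p.1 0 p.2 := by
  obtain ⟨ha, hb, hc⟩ := hg
  rw [← mk_a_b_c g]
  by_cases hab : g.a = 0 ∧ g.b = 0
  · rw [hab.1, hab.2]
    refine ⟨(0, |g.c|), by simp [reps, hc], ?_⟩
    have hswap : swap (mk 0 0 g.c) = mk 0 0 (-g.c) := by ext <;> simp [swap_apply]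
    rcases abs_choice g.c with h | h
    · simpa only [h] using Setoid.refl' _ (mk 0 0 g.c)
    · simpa only [h, hswap] using MulAction.orbitRel_mulAut_apply swap (mk 0 0 g.c)
  · obtain ⟨d, c', hd, hle, hrel⟩ := exists_orbitRel_mk_pos g.a g.b g.c (not_and_or.1 hab)
    have hshear : shear (-(c' / d)) (mk d 0 c') = mk d 0 (c' % d) := by
      ext <;> simp [shear_apply, Int.emod_def]
      ring
    refine ⟨(d, c' % d), ?_, Setoid.trans' _ hrel (hshear ▸ MulAction.orbitRel_mulAut_apply _ _)⟩
    have hdn : d ≤ n := hle.trans (max_le ha hb)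
    have hmod := Int.emod_nonneg c' hd.ne'
    have hmod' := Int.emod_lt_of_pos c' hd
    simp only [reps, Finset.mem_union, Finset.mem_product, Finset.mem_Icc]
    left
    omega

theorem autGrowth_gens_le (n : ℕ) : autGrowth (gens : Set Heisenberg) n ≤ 2 * (n + 1) ^ 2 :=
  (Setoid.ncard_image_mk_le_card _ (fun p : ℤ × ℤ => mk p.1 0 p.2)
    fun _ hg => exists_mem_reps_orbitRel (wordBall_gens_subset_box n hg)).trans (card_reps_le n)

theorem eq_mk_of_forall_commute {g : Heisenberg} (hg : ∀ h, Commute g h) : g = mk 0 0 g.c := by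
  have hc : ∀ h : Heisenberg, g.a * h.b - g.b * h.a = 0 := fun h => by
    simpa [commutatorElement_eq] using congrArg c (commutatorElement_eq_one_iff_commute.2 (hg h))
  ext
  · simpa using hc (mk 0 1 0)
  · simpa using hc (mk 1 0 0)
  · rfl

theorem mulAut_mk_center (φ : MulAut Heisenberg) (k : ℤ) :
    φ (mk 0 0 k) = mk 0 0 (k * (φ (mk 0 0 1)).c) := by
  have hcentral : ∀ h, Commute (φ (mk 0 0 1)) h := fun h => by
    rw [← φ.apply_symm_apply h]
    exact Commute.map (by ext <;> simp [add_comm]) φ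
  rw [show mk 0 0 k = mk 0 0 1 ^ k by simp [mk_zpow], map_zpow, eq_mk_of_forall_commute hcentral,
    mk_zpow (mul_zero 0)]
  simp

theorem natAbs_eq_of_orbitRel_mk_center {j k : ℤ} (h : mk 0 0 j ≈ₐ mk 0 0 k) :
    j.natAbs = k.natAbs := by
  obtain ⟨φ, hφ : φ (mk 0 0 k) = mk 0 0 j⟩ := h
  have hj := congrArg c ((mulAut_mk_center φ k).symm.trans hφ)
  have hk := congrArg c ((mulAut_mk_center φ.symm j).symm.trans (φ.symm_apply_eq.2 hφ.symm))
  simp only [mk_c] at hj hk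
  exact Int.natAbs_eq_of_dvd_dvd ⟨_, hk.symm⟩ ⟨_, hj.symm⟩

theorem mk_center_mem_wordBall {n k : ℕ} (hk : k ≤ n ^ 2) :
    mk 0 0 k ∈ wordBall (gens : Set Heisenberg) (6 * n + 6) := by
  have hx : mk 1 0 0 ∈ (gens : Set Heisenberg) := by simp [gens]
  have hy : mk 0 1 0 ∈ (gens : Set Heisenberg) := by simp [gens]
  have hq : k / (n + 1) ≤ n := Nat.div_le_of_le_mul (by nlinarith)
  have hr : k % (n + 1) ≤ n := Nat.le_of_lt_succ (Nat.mod_lt _ n.succ_pos)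
  have hprod : mk 0 0 k =
      ⁅mk 1 0 0 ^ (k / (n + 1)), mk 0 1 0 ^ (n + 1)⁆ * ⁅mk 1 0 0 ^ (k % (n + 1)), mk 0 1 0⁆ := by
    simp only [← zpow_natCast, mk_zpow (mul_zero _), mk_zpow (zero_mul _), commutatorElement_eq]
    ext <;> simp
    exact_mod_cast (Nat.div_add_mod' k (n + 1)).symm
  rw [hprod]
  exact wordBall_mono (by omega) (mul_mem_wordBall
    (commutatorElement_mem_wordBall (pow_mem_wordBall hx _) (pow_mem_wordBall hy _))
    (commutatorElement_mem_wordBall (pow_mem_wordBall hx _) (mem_wordBall_one hy)))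

theorem sq_le_autGrowth_gens (n : ℕ) :
    n ^ 2 ≤ autGrowth (gens : Set Heisenberg) (6 * n + 6) :=
  calc n ^ 2 ≤ (Finset.range (n ^ 2 + 1)).card := by simp
    _ ≤ _ := Setoid.card_le_ncard_image_mk _ (wordBall_finite gens.finite_toSet _)
      (fun k : ℕ => mk 0 0 k)
      (fun k hk => mk_center_mem_wordBall (by simpa [Nat.lt_succ_iff] using hk))
      fun j _ k _ h => by simpa using natAbs_eq_of_orbitRel_mk_center h

theorem growthLe_autGrowth_gens_sq : GrowthLe (autGrowth (gens : Set Heisenberg)) (· ^ 2) :=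
  ⟨2, two_pos, fun n => (autGrowth_gens_le n).trans (by nlinarith)⟩

theorem growthLe_sq_autGrowth_gens : GrowthLe (· ^ 2) (autGrowth (gens : Set Heisenberg)) :=
  ⟨6, by norm_num, fun n => (sq_le_autGrowth_gens n).trans (by omega)⟩

end Heisenberg

/-- the Heisenberg group is finitely generated and its automorphic
growth is quadratic, with respect to every finite generating set. -/
theorem automorphic_growth_heisenberg :
    (∃ S : Finset Heisenberg, Subgroup.closure (S : Set Heisenberg) = ⊤) ∧
    (∀ S : Finset Heisenberg, Subgroup.closure (S : Set Heisenberg) = ⊤ →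
      GrowthEquiv (autGrowth (S : Set Heisenberg)) (fun n => n ^ 2)) := by
  have hgens := Heisenberg.closure_gens
  refine ⟨⟨Heisenberg.gens, hgens⟩, fun S hS => ⟨?_, ?_⟩⟩
  · exact (growthLe_autGrowth S.finite_toSet (Finset.finite_toSet _) hgens).trans
      Heisenberg.growthLe_autGrowth_gens_sq fun _ _ h => Nat.pow_le_pow_left h 2
  · exact Heisenberg.growthLe_sq_autGrowth_gens.trans
      (growthLe_autGrowth (Finset.finite_toSet _) S.finite_toSet hS) (autGrowth_mono S.finite_toSet)
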